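/- Let T be an n×n real M-matrix. Then for every b ∈ ℝⁿ the piecewise linear system [I − P(x) + T·P(x)]·x = b has a unique solution x ∈ ℝⁿ. -/

import Mathlib

open Matrix

/-- Spectral radius of a real matrix: supremum of absolute values of its complex eigenvalues. -/
noncomputable def specRad {n : ℕ} (B : Matrix (Fin n) (Fin n) ℝ) : ℝ :=
  sSup {r : ℝ | ∃ μ ∈ spectrum ℂ (B.map (fun a => (a : ℂ))), r = ‖μ‖}

/-- `T` is an M-matrix: `T = α•I - B` with `B ≥ O` entrywise and `ρ(B) < α`. -/
def IsMmat {n : ℕ} (T : Matrix (Fin n) (Fin n) ℝ) : Prop :=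
  ∃ (α : ℝ) (B : Matrix (Fin n) (Fin n) ℝ),
    (∀ i j, 0 ≤ B i j) ∧ specRad B < α ∧ T = α • (1 : Matrix (Fin n) (Fin n) ℝ) - B

/-- `P(x)`: diagonal matrix with i-th entry `1` if `x i ≥ 0`, else `0`. -/
noncomputable def Pmat {n : ℕ} (x : Fin n → ℝ) : Matrix (Fin n) (Fin n) ℝ :=
  Matrix.diagonal fun i => if 0 ≤ x i then 1 else 0

/-- Irreducibility of a matrix (strong connectivity of its directed graph). -/
def IsIrred {n : ℕ} (T : Matrix (Fin n) (Fin n) ℝ) : Prop :=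
  ∀ S : Finset (Fin n), S.Nonempty → S ≠ Finset.univ → ∃ i ∈ S, ∃ j ∉ S, T i j ≠ 0

/-- Condition T2: `T` is irreducible, `null(Tᵀ) = span(v)`, `null(T) = span(w)` with
`v, w > 0` componentwise, and `T + D` is an M-matrix for every diagonal `D ≥ O`, `D ≠ O`. -/
def CondT2 {n : ℕ} (T : Matrix (Fin n) (Fin n) ℝ) (v w : Fin n → ℝ) : Prop :=
  IsIrred T ∧ (∀ i, 0 < v i) ∧ (∀ i, 0 < w i) ∧
  LinearMap.ker (Matrix.mulVecLin Tᵀ) = Submodule.span ℝ {v} ∧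
  LinearMap.ker (Matrix.mulVecLin T) = Submodule.span ℝ {w} ∧
  (∀ d : Fin n → ℝ, (∀ i, 0 ≤ d i) → d ≠ 0 → IsMmat (T + Matrix.diagonal d))

/-!
Write `T = α • 1 - B` with `B ≥ 0` and `ρ(B) < α`. Since `P(x) x = x⁺`, the system reads
`x = G x⁺` with `G u = u + b - T u`, and `x ↦ x⁺` is a bijection from its solutions onto the
fixed points of `u ↦ (G u)⁺`. Coordinate by coordinate, these are the fixed points of
`H u = (α⁻¹ • (B u + b))⁺`, and `H` has exactly one: `|H u - H v| ≤ α⁻¹ B |u - v|`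
entrywise, so `H^[m]` is a sup-norm contraction as soon as `‖(α⁻¹ • B) ^ m‖ < 1`, which holds for
some `m` by Gelfand's formula.
-/

open Filter Function

attribute [local instance] Matrix.linftyOpNormedAddCommGroup Matrix.linftyOpNormedRing
  Matrix.linftyOpNormedSpace Matrix.linftyOpNormedAlgebra

theorem ContractingWith.existsUnique_isFixedPt_of_iterate {α : Type*} [MetricSpace α]
    [Nonempty α] [CompleteSpace α] {K : NNReal} {f : α → α} {m : ℕ}
    (hf : ContractingWith K f^[m]) : ∃! x, IsFixedPt f x :=
  ⟨_, hf.isFixedPt_fixedPoint_iterate, fun _ hx => hf.fixedPoint_unique (hx.iterate m)⟩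

instance Pi.hasSolidNorm {ι α : Type*} [Fintype ι] [NormedAddCommGroup α] [Lattice α]
    [HasSolidNorm α] : HasSolidNorm (ι → α) :=
  ⟨fun _ b h => (pi_norm_le_iff_of_nonneg (norm_nonneg b)).2 fun i =>
    (norm_le_norm_of_abs_le_abs (h i)).trans (norm_le_pi_norm b i)⟩

namespace Matrix

variable {ι : Type*} [Fintype ι] {E : Matrix ι ι ℝ}

theorem mulVec_mono_of_nonneg (hE : ∀ i j, 0 ≤ E i j) : Monotone (E *ᵥ ·) :=
  fun _ _ h i => Finset.sum_le_sum fun j _ => mul_le_mul_of_nonneg_left (h j) (hE i j)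

theorem abs_mulVec_le_mulVec_abs (hE : ∀ i j, 0 ≤ E i j) (v : ι → ℝ) :
    |E *ᵥ v| ≤ E *ᵥ |v| := fun i =>
  (Finset.abs_sum_le_sum_abs _ _).trans_eq <| Finset.sum_congr rfl fun j _ => by
    simp [abs_mul, abs_of_nonneg (hE i j)]

theorem abs_posPart_mulVec_add_sub_le (hE : ∀ i j, 0 ≤ E i j) (c u v : ι → ℝ) :
    |(E *ᵥ u + c)⁺ - (E *ᵥ v + c)⁺| ≤ E *ᵥ |u - v| :=
  calc |(E *ᵥ u + c)⁺ - (E *ᵥ v + c)⁺| ≤ |E *ᵥ u + c - (E *ᵥ v + c)| :=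
        abs_sup_sub_sup_le_abs _ _ 0
    _ = |E *ᵥ (u - v)| := by rw [add_sub_add_right_eq_sub, mulVec_sub]
    _ ≤ E *ᵥ |u - v| := abs_mulVec_le_mulVec_abs hE _

theorem abs_iterate_posPart_mulVec_add_sub_le [DecidableEq ι] (hE : ∀ i j, 0 ≤ E i j)
    (c u v : ι → ℝ) (k : ℕ) :
    |(fun w => (E *ᵥ w + c)⁺)^[k] u - (fun w => (E *ᵥ w + c)⁺)^[k] v| ≤ (E ^ k) *ᵥ |u - v| := by
  induction k with
  | zero => simp
  | succ k ih =>
    rw [iterate_succ_apply', iterate_succ_apply', pow_succ', ← mulVec_mulVec]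
    exact (abs_posPart_mulVec_add_sub_le hE c _ _).trans (mulVec_mono_of_nonneg hE ih)

theorem contractingWith_iterate_posPart_mulVec_add [DecidableEq ι] (hE : ∀ i j, 0 ≤ E i j)
    (c : ι → ℝ) {m : ℕ} (hm : ‖E ^ m‖ < 1) : ContractingWith ‖E ^ m‖₊ (fun w => (E *ᵥ w + c)⁺)^[m] := by
  refine ⟨hm, LipschitzWith.of_dist_le_mul fun u v => ?_⟩
  rw [dist_eq_norm, dist_eq_norm, coe_nnnorm]
  calc _ ≤ ‖E ^ m *ᵥ |u - v|‖ := norm_le_norm_of_abs_le_abs <|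
        (abs_iterate_posPart_mulVec_add_sub_le hE c u v m).trans (le_abs_self _)
    _ ≤ ‖E ^ m‖ * ‖|u - v|‖ := linfty_opNorm_mulVec _ _
    _ = ‖E ^ m‖ * ‖u - v‖ := by rw [norm_abs_eq_norm]

end Matrix

theorem spectrum.exists_norm_pow_lt_pow {A : Type*} [NormedRing A] [NormedAlgebra ℂ A]
    [CompleteSpace A] {a : A} {r : ℝ} (h : spectralRadius ℂ a < ENNReal.ofReal r) :
    ∃ m, ‖a ^ m‖ < r ^ m := by
  obtain ⟨m, hm, hm1⟩ := (((pow_norm_pow_one_div_tendsto_nhds_spectralRadius a).eventually_lt_const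
    h).and (eventually_ge_atTop 1)).exists
  have hr : 0 < r := ENNReal.ofReal_pos.1 (pos_of_gt h)
  rw [ENNReal.ofReal_lt_ofReal_iff hr] at hm
  refine ⟨m, ?_⟩
  calc ‖a ^ m‖ = (‖a ^ m‖ ^ (1 / m : ℝ)) ^ m := by
        rw [one_div, Real.rpow_inv_natCast_pow (norm_nonneg _) (by omega)]
    _ < r ^ m := pow_lt_pow_left₀ hm (by positivity) (by omega)

theorem Matrix.linfty_opNorm_map_ofReal {ι : Type*} [Fintype ι] (B : Matrix ι ι ℝ) :
    ‖B.map ((↑) : ℝ → ℂ)‖ = ‖B‖ := by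
  simp only [linfty_opNorm_def, map_apply, Complex.nnnorm_real]

theorem specRad_nonneg {n : ℕ} (B : Matrix (Fin n) (Fin n) ℝ) : 0 ≤ specRad B :=
  Real.sSup_nonneg fun _ ⟨μ, _, h⟩ => h ▸ norm_nonneg μ

theorem spectralRadius_map_ofReal_le_specRad {n : ℕ} (B : Matrix (Fin n) (Fin n) ℝ) :
    spectralRadius ℂ (B.map ((↑) : ℝ → ℂ)) ≤ ENNReal.ofReal (specRad B) := by
  have hbdd : BddAbove {r : ℝ | ∃ μ ∈ spectrum ℂ (B.map ((↑) : ℝ → ℂ)), r = ‖μ‖} := by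
    obtain ⟨C, hC⟩ :=
      ((spectrum.isCompact (B.map ((↑) : ℝ → ℂ))).image (continuous_norm (E := ℂ))).bddAbove
    exact ⟨C, fun r ⟨μ, hμ, hr⟩ => hC ⟨μ, hμ, hr.symm⟩⟩
  refine iSup₂_le fun μ hμ => ?_
  rw [← ENNReal.ofReal_coe_nnreal, coe_nnnorm]
  exact ENNReal.ofReal_le_ofReal (le_csSup hbdd ⟨μ, hμ, rfl⟩)

theorem exists_norm_pow_smul_lt_one_of_specRad_lt {n : ℕ} {B : Matrix (Fin n) (Fin n) ℝ} {α : ℝ}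
    (h : specRad B < α) : ∃ m, ‖(α⁻¹ • B) ^ m‖ < 1 := by
  have hα : 0 < α := (specRad_nonneg B).trans_lt h
  obtain ⟨m, hm⟩ := spectrum.exists_norm_pow_lt_pow <|
    (spectralRadius_map_ofReal_le_specRad B).trans_lt ((ENNReal.ofReal_lt_ofReal_iff hα).2 h)
  have hpow : B.map ((↑) : ℝ → ℂ) ^ m = (B ^ m).map (↑) :=
    (map_pow (Complex.ofRealHom.mapMatrix (m := Fin n)) B m).symm
  rw [hpow, linfty_opNorm_map_ofReal] at hm
  refine ⟨m, ?_⟩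
  rw [smul_pow, norm_smul, norm_pow, norm_inv, Real.norm_of_nonneg hα.le, inv_pow,
    inv_mul_lt_one₀ (pow_pos hα m)]
  exact hm

theorem existsUnique_eq_apply_posPart {X : Type*} [Lattice X] [AddGroup X] {G : X → X}
    (h : ∃! u, u = (G u)⁺) : ∃! x, x = G x⁺ := by
  obtain ⟨u, hu, huniq⟩ := h
  refine ⟨G u, by dsimp only; rw [← hu], fun x (hx : x = G x⁺) => ?_⟩
  have hxu : x⁺ = u := huniq _ (by dsimp only; rw [← hx])
  rw [hx, hxu]

theorem eq_posPart_add_sub_mul_iff {α u c : ℝ} (hα : 0 < α) :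
    u = (u + c - α * u)⁺ ↔ u = (α⁻¹ * c)⁺ := by
  obtain ⟨d, rfl⟩ : ∃ d, c = α * d := ⟨α⁻¹ * c, by field_simp⟩
  rw [inv_mul_cancel_left₀ hα.ne', posPart_def, posPart_def]
  rcases max_cases (u + α * d - α * u) 0 with ⟨h1, h2⟩ | ⟨h1, h2⟩ <;>
    rcases max_cases d 0 with ⟨h3, h4⟩ | ⟨h3, h4⟩ <;>
    rw [h1, h3] <;> constructor <;> intro h <;> nlinarith

theorem eq_posPart_sub_mulVec_iff_isFixedPt {ι : Type*} [Fintype ι] [DecidableEq ι] {α : ℝ}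
    (hα : 0 < α) (B : Matrix ι ι ℝ) (b u : ι → ℝ) :
    u = (u + b - (α • 1 - B) *ᵥ u)⁺ ↔ IsFixedPt (fun w => ((α⁻¹ • B) *ᵥ w + α⁻¹ • b)⁺) u := by
  rw [IsFixedPt, eq_comm (b := u), funext_iff, funext_iff]
  refine forall_congr' fun i => ?_
  convert eq_posPart_add_sub_mul_iff hα (c := (B *ᵥ u) i + b i) using 4
  · simp only [Pi.posPart_apply, sub_mulVec, smul_mulVec, one_mulVec, Pi.add_apply, Pi.sub_apply,
      Pi.smul_apply, smul_eq_mul]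
    congr 1
    ring
  · simp only [Pi.posPart_apply, smul_mulVec, Pi.add_apply, Pi.smul_apply, smul_eq_mul, mul_add]

theorem mulVec_Pmat_self {n : ℕ} (x : Fin n → ℝ) : Pmat x *ᵥ x = x⁺ := by
  ext i
  by_cases h : 0 ≤ x i
  · simp [Pmat, mulVec_diagonal, h]
  · simp [Pmat, mulVec_diagonal, h, posPart_eq_zero.2 (not_le.1 h).le]

theorem mulVec_one_sub_Pmat_add_mul_Pmat_eq_iff {n : ℕ} (T : Matrix (Fin n) (Fin n) ℝ)
    (x b : Fin n → ℝ) : (1 - Pmat x + T * Pmat x) *ᵥ x = b ↔ x = x⁺ + b - T *ᵥ x⁺ := by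
  rw [add_mulVec, sub_mulVec, one_mulVec, ← mulVec_mulVec, mulVec_Pmat_self]
  constructor <;> intro h
  · rw [← h]; abel
  · nth_rw 1 [h]; abel

/-- If `T` is an M-matrix, the piecewise linear system
`[I − P(x) + T·P(x)]·x = b` has a unique solution for every `b`. -/
theorem stmt12 {n : ℕ} (T : Matrix (Fin n) (Fin n) ℝ) (hT : IsMmat T) (b : Fin n → ℝ) :
    ∃! x : Fin n → ℝ, (1 - Pmat x + T * Pmat x) *ᵥ x = b := by
  obtain ⟨α, B, hB, hα, rfl⟩ := hT
  have hα0 : 0 < α := (specRad_nonneg B).trans_lt hα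
  have hE : ∀ i j, 0 ≤ (α⁻¹ • B) i j := fun i j => mul_nonneg (inv_nonneg.2 hα0.le) (hB i j)
  obtain ⟨m, hm⟩ := exists_norm_pow_smul_lt_one_of_specRad_lt hα
  have hH := (Matrix.contractingWith_iterate_posPart_mulVec_add hE (α⁻¹ • b) hm
    ).existsUnique_isFixedPt_of_iterate
  simp_rw [mulVec_one_sub_Pmat_add_mul_Pmat_eq_iff]
  exact existsUnique_eq_apply_posPart
    ((existsUnique_congr (eq_posPart_sub_mulVec_iff_isFixedPt hα0 B b)).2 hH)
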